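/- arXiv:1904.06127 — 3 statements merged into one kernel-verified Lean document; each statement's English description precedes it below -/
import Mathlib

section
/- For the coupling η produced by the greedy algorithm with uniform target weights w̃_j = 1/n', the support of the j-th column of η is contained in the index interval [k_{j-1}, k_j], where k_u = min{ l : ∑_{i=1}^l w_i ≥ u/n' } for u = j−1, j (with k_0 = 1). Consequently the segmentation point x̃_j = ∑_{i=1}^n η_{i,j} n' x_i satisfies x_{k_{j-1}} ≤ x̃_j ≤ x_{k_j}. -/
/-!
Writing `W m = w 1 + ⋯ + w m`, the greedy coupling puts `η i j` equal to the length of the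
overlap of the source interval `[W (i-1), W i]` with the target interval `[(j-1)/n', j/n']`.
Row `i` can only meet column `j` when `W i > (j-1)/n'` and `W (i-1) < j/n'`, which by the
minimality of `k` forces `k (j-1) ≤ i ≤ k j`. Clamping `W` to the target interval turns the
column into a telescoping sum of total mass `1/n'`, so `x̃ j` is a convex combination of the
`x i` with `i` in the column's support, and monotonicity of `x` gives the bounds.
-/

open Finset

def intervalOverlap (p q a b : ℝ) : ℝ := max 0 (min q b - max p a)

section intervalOverlap

variable {p q a b : ℝ}

lemma intervalOverlap_nonneg : 0 ≤ intervalOverlap p q a b := le_max_left _ _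

lemma intervalOverlap_eq_zero_of_le_left (h : q ≤ a) : intervalOverlap p q a b = 0 :=
  max_eq_left (by linarith [min_le_left q b, le_max_right p a])

lemma intervalOverlap_eq_zero_of_right_le (h : b ≤ p) : intervalOverlap p q a b = 0 :=
  max_eq_left (by linarith [min_le_right q b, le_max_left p a])

lemma intervalOverlap_eq_sub_clamp (hpq : p ≤ q) (hab : a ≤ b) :
    intervalOverlap p q a b = min (max q a) b - min (max p a) b := by
  simp only [intervalOverlap, max_def, min_def]
  split_ifs <;> linarith

end intervalOverlap

lemma sum_Icc_one_sub_pred (g : ℕ → ℝ) (n : ℕ) :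
    ∑ i ∈ Icc 1 n, (g i - g (i - 1)) = g n - g 0 := by
  induction n with
  | zero => simp
  | succ m ih =>
    rw [sum_Icc_succ_top (Nat.succ_pos m), ih]
    simp

lemma sum_intervalOverlap_of_monotoneOn {W : ℕ → ℝ} {n : ℕ} {a b : ℝ}
    (hW : MonotoneOn W (Set.Iic n)) (hab : a ≤ b) (ha : W 0 ≤ a) (hb : b ≤ W n) :
    ∑ i ∈ Icc 1 n, intervalOverlap (W (i - 1)) (W i) a b = b - a := by
  have hstep : ∀ i ∈ Icc 1 n, intervalOverlap (W (i - 1)) (W i) a b =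
      min (max (W i) a) b - min (max (W (i - 1)) a) b := fun i hi =>
    have hin : i ≤ n := (mem_Icc.1 hi).2
    intervalOverlap_eq_sub_clamp (hW ((Nat.sub_le i 1).trans hin) hin (Nat.sub_le i 1)) hab
  rw [sum_congr rfl hstep, sum_Icc_one_sub_pred (fun m => min (max (W m) a) b),
    max_eq_left (hab.trans hb), min_eq_right hb, max_eq_right ha, min_eq_left hab]

lemma monotoneOn_sum_Icc_one {w : ℕ → ℝ} {n : ℕ} (hw : ∀ i ∈ Icc 1 n, 0 ≤ w i) :
    MonotoneOn (fun m => ∑ i ∈ Icc 1 m, w i) (Set.Iic n) := fun _ _ _ hq hpq =>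
  sum_le_sum_of_subset_of_nonneg (Icc_subset_Icc le_rfl hpq) fun i hi _ =>
    hw i (mem_Icc.2 ⟨(mem_Icc.1 hi).1, (mem_Icc.1 hi).2.trans hq⟩)

lemma Convex.sum_mem_of_ne_zero {R E ι : Type*} [Field R] [LinearOrder R] [IsStrictOrderedRing R]
    [AddCommGroup E] [Module R E] {s : Set E} {t : Finset ι} {w : ι → R} {z : ι → E}
    (hs : Convex R s) (h₀ : ∀ i ∈ t, 0 ≤ w i) (h₁ : ∑ i ∈ t, w i = 1)
    (hz : ∀ i ∈ t, w i ≠ 0 → z i ∈ s) : ∑ i ∈ t, w i • z i ∈ s := by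
  classical
  rw [← sum_filter_of_ne fun i _ h => left_ne_zero_of_smul h]
  exact hs.sum_mem (fun i hi => h₀ i (mem_filter.1 hi).1) (by rwa [sum_filter_ne_zero])
    fun i hi => hz i (mem_filter.1 hi).1 (mem_filter.1 hi).2

lemma sum_intervalOverlap_uniform_column {W : ℕ → ℝ} {n n' j : ℕ}
    (hW : MonotoneOn W (Set.Iic n)) (hW0 : W 0 = 0) (hWn : W n = 1) (hj : j ∈ Icc 1 n') :
    ∑ i ∈ Icc 1 n, intervalOverlap (W (i - 1)) (W i) ((j - 1) / n') (j / n') = 1 / n' := by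
  obtain ⟨hj1, hjn'⟩ := mem_Icc.1 hj
  have hn' : (0 : ℝ) < n' := by norm_cast; omega
  have hj1_real : (1 : ℝ) ≤ j := by exact_mod_cast hj1
  have hjn'_real : (j : ℝ) ≤ n' := by exact_mod_cast hjn'
  rw [sum_intervalOverlap_of_monotoneOn hW (by gcongr; linarith)
    (hW0 ▸ div_nonneg (by linarith) hn'.le) (hWn ▸ (div_le_one hn').2 hjn'_real)]
  ring

lemma mem_Icc_of_intervalOverlap_ne_zero {W : ℕ → ℝ} {n kl kh i : ℕ} {a b : ℝ}
    (hW : MonotoneOn W (Set.Iic n)) (hi : i ∈ Icc 1 n)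
    (hkl : ∀ l, 1 ≤ l → l < kl → W l < a) (hkh : b ≤ W kh)
    (h : intervalOverlap (W (i - 1)) (W i) a b ≠ 0) : kl ≤ i ∧ i ≤ kh := by
  obtain ⟨hi1, hin⟩ := mem_Icc.1 hi
  constructor
  · by_contra! hlt
    exact h (intervalOverlap_eq_zero_of_le_left (hkl i hi1 hlt).le)
  · by_contra! hlt
    have hkh_le : W kh ≤ W (i - 1) :=
      hW (Set.mem_Iic.2 (by omega)) (Set.mem_Iic.2 (by omega)) (by omega)
    exact h (intervalOverlap_eq_zero_of_right_le (hkh.trans hkh_le))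

theorem greedy_column_support_and_segpoint_bounds_general
    (n n' : ℕ)
    (x w : ℕ → ℝ)
    (hx : StrictMonoOn x (Set.Icc 1 n))
    (hw : ∀ i ∈ Finset.Icc 1 n, 0 ≤ w i)
    (hw1 : ∑ i ∈ Finset.Icc 1 n, w i = 1)
    (k : ℕ → ℕ) (hk0 : k 0 = 1)
    (hk : ∀ u ∈ Finset.Icc 1 n', k u ∈ Finset.Icc 1 n ∧
      (u : ℝ) / n' ≤ ∑ i ∈ Finset.Icc 1 (k u), w i ∧
      ∀ l < k u, ∑ i ∈ Finset.Icc 1 l, w i < (u : ℝ) / n')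
    (η : ℕ → ℕ → ℝ)
    (hη : ∀ i j, η i j =
      max 0 (min (∑ l ∈ Finset.Icc 1 i, w l) ((j : ℝ) / n')
        - max (∑ l ∈ Finset.Icc 1 (i - 1), w l) (((j : ℝ) - 1) / n')))
    (xt : ℕ → ℝ)
    (hxt : ∀ j, xt j = n' * ∑ i ∈ Finset.Icc 1 n, η i j * x i) :
    ∀ j ∈ Finset.Icc 1 n',
      (∀ i ∈ Finset.Icc 1 n, η i j ≠ 0 → k (j - 1) ≤ i ∧ i ≤ k j) ∧
      x (k (j - 1)) ≤ xt j ∧ xt j ≤ x (k j) := by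
  intro j hj
  obtain ⟨hj1, hjn'⟩ := mem_Icc.1 hj
  set W : ℕ → ℝ := fun m => ∑ i ∈ Icc 1 m, w i
  have hW : MonotoneOn W (Set.Iic n) := monotoneOn_sum_Icc_one hw
  have hηj (i : ℕ) : η i j = intervalOverlap (W (i - 1)) (W i) ((j - 1) / n') (j / n') := hη i j
  have hkj := hk j hj
  have hlow : 1 ≤ k (j - 1) ∧ ∀ l, 1 ≤ l → l < k (j - 1) → W l < ((j : ℝ) - 1) / n' := by
    rcases hj1.eq_or_lt with rfl | hj1
    · exact ⟨hk0.ge, fun l hl hlk => by simp only [Nat.sub_self, hk0] at hlk; omega⟩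
    · have hkj' := hk (j - 1) (mem_Icc.2 ⟨by omega, by omega⟩)
      refine ⟨(mem_Icc.1 hkj'.1).1, fun l _ hl => ?_⟩
      simpa only [Nat.cast_pred (zero_lt_one.trans hj1)] using hkj'.2.2 l hl
  have hsupp (i : ℕ) (hi : i ∈ Icc 1 n) (h : η i j ≠ 0) : k (j - 1) ≤ i ∧ i ≤ k j :=
    mem_Icc_of_intervalOverlap_ne_zero hW hi hlow.2 hkj.2.1 (hηj i ▸ h)
  have hmass : ∑ i ∈ Icc 1 n, (n' : ℝ) * η i j = 1 := by
    rw [← mul_sum, sum_congr rfl fun i _ => hηj i,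
      sum_intervalOverlap_uniform_column hW (by simp [W]) hw1 hj]
    exact mul_one_div_cancel (Nat.cast_ne_zero.2 (by omega))
  refine ⟨hsupp, ?_⟩
  have hxt' : xt j = ∑ i ∈ Icc 1 n, ((n' : ℝ) * η i j) • x i := by
    simp only [hxt, mul_sum, smul_eq_mul, mul_assoc]
  rw [← Set.mem_Icc, hxt']
  refine (convex_Icc _ _).sum_mem_of_ne_zero
    (fun i _ => mul_nonneg n'.cast_nonneg (hηj i ▸ intervalOverlap_nonneg)) hmass fun i hi h => ?_
  obtain ⟨hlo, hhi⟩ := hsupp i hi (right_ne_zero_of_mul h)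
  have hi' := mem_Icc.1 hi
  exact ⟨hx.monotoneOn ⟨hlow.1, hlo.trans hi'.2⟩ hi' hlo, hx.monotoneOn hi' (mem_Icc.1 hkj.1) hhi⟩

/-- For the greedy coupling with uniform target weights `1/n'`, the support of the `j`-th
column is contained in `[k (j-1), k j]`, where `k u` is the least index whose cumulative
weight reaches `u / n'` (with `k 0 = 1`); consequently the segmentation point
`x̃ j = n' * ∑ i, η i j * x i` satisfies `x (k (j-1)) ≤ x̃ j ≤ x (k j)`. -/
theorem greedy_column_support_and_segpoint_bounds
    (n n' : ℕ) (hn : 1 ≤ n) (hn' : 1 ≤ n')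
    (x w : ℕ → ℝ)
    (hx : StrictMonoOn x (Set.Icc 1 n))
    (hw : ∀ i ∈ Finset.Icc 1 n, 0 ≤ w i)
    (hw1 : ∑ i ∈ Finset.Icc 1 n, w i = 1)
    (k : ℕ → ℕ) (hk0 : k 0 = 1)
    (hk : ∀ u ∈ Finset.Icc 1 n', k u ∈ Finset.Icc 1 n ∧
      (u : ℝ) / n' ≤ ∑ i ∈ Finset.Icc 1 (k u), w i ∧
      ∀ l < k u, ∑ i ∈ Finset.Icc 1 l, w i < (u : ℝ) / n')
    (η : ℕ → ℕ → ℝ)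
    (hη : ∀ i j, η i j =
      max 0 (min (∑ l ∈ Finset.Icc 1 i, w l) ((j : ℝ) / n')
        - max (∑ l ∈ Finset.Icc 1 (i - 1), w l) (((j : ℝ) - 1) / n')))
    (xt : ℕ → ℝ)
    (hxt : ∀ j, xt j = n' * ∑ i ∈ Finset.Icc 1 n, η i j * x i) :
    ∀ j ∈ Finset.Icc 1 n',
      (∀ i ∈ Finset.Icc 1 n, η i j ≠ 0 → k (j - 1) ≤ i ∧ i ≤ k j) ∧
      x (k (j - 1)) ≤ xt j ∧ xt j ≤ x (k j) :=
  greedy_column_support_and_segpoint_bounds_general n n' x w hx hw hw1 k hk0 hk η hη xt hxt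
end

section
/- The segmentation points x̃_1, ..., x̃_{n'} defined by x̃_j = n' ∑_{i=1}^n η_{i,j} x_i, where η is the greedy coupling to uniform target weights, form a nondecreasing sequence: x̃_1 ≤ x̃_2 ≤ ... ≤ x̃_{n'}. -/
/-!
With `W i = w 1 + ⋯ + w i`, the greedy coupling puts on `(i, j)` the length of the overlap of
`[W (i-1), W i]` with the `j`-th segment `[(j-1)/n', j/n']`. By telescoping every column has mass
`1/n'`, so `x̃ j` is an average of the `x i` over the pieces meeting the `j`-th segment. Every
such piece comes no later than any piece meeting the `(j+1)`-th segment, and `x` is monotone.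
-/

open Finset

/-- The length of the intersection of the intervals `[a, b]` and `[u, v]`. -/
def overlapLength (a b u v : ℝ) : ℝ := max 0 (min b v - max a u)

lemma overlapLength_nonneg (a b u v : ℝ) : 0 ≤ overlapLength a b u v := le_max_left _ _

lemma overlapLength_eq_sub {a b u v : ℝ} (hab : a ≤ b) (huv : u ≤ v) :
    overlapLength a b u v = max u (min b v) - max u (min a v) := by
  simp only [overlapLength, max_def, min_def]
  split_ifs <;> linarith

lemma lt_of_overlapLength_pos {a b u v : ℝ} (h : 0 < overlapLength a b u v) :
    a < v ∧ u < b := by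
  simp only [overlapLength, lt_max_iff, lt_irrefl, false_or, sub_pos, max_lt_iff,
    lt_min_iff] at h
  exact ⟨h.2.1, h.1.2⟩

lemma sum_Icc_sub_pred {M : Type*} [AddCommGroup M] (G : ℕ → M) (n : ℕ) :
    ∑ i ∈ Icc 1 n, (G i - G (i - 1)) = G n - G 0 := by
  induction n with
  | zero => simp
  | succ n ih =>
    rw [sum_Icc_succ_top (Nat.le_add_left 1 n), ih, Nat.add_sub_cancel]
    abel

lemma sum_overlapLength_eq {W : ℕ → ℝ} {n : ℕ} {u v : ℝ} (hW : MonotoneOn W (Set.Iic n))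
    (hu : W 0 ≤ u) (huv : u ≤ v) (hv : v ≤ W n) :
    ∑ i ∈ Icc 1 n, overlapLength (W (i - 1)) (W i) u v = v - u := by
  have hterm : ∀ i ∈ Icc 1 n, overlapLength (W (i - 1)) (W i) u v =
      max u (min (W i) v) - max u (min (W (i - 1)) v) := by
    intro i hi
    have hin : i ≤ n := (mem_Icc.1 hi).2
    exact overlapLength_eq_sub (hW (by simp; omega) (by simpa using hin) (by omega)) huv
  rw [sum_congr rfl hterm, sum_Icc_sub_pred (fun i => max u (min (W i) v)),
    min_eq_right hv, max_eq_right huv, min_eq_left (hu.trans huv), max_eq_left hu]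

lemma sum_mul_mul_sum_le_sum_mul_sum_mul {ι R : Type*} [CommSemiring R] [PartialOrder R]
    [IsOrderedRing R] {s : Finset ι} {p q f : ι → R}
    (hp : ∀ i ∈ s, 0 ≤ p i) (hq : ∀ i ∈ s, 0 ≤ q i)
    (hf : ∀ i ∈ s, ∀ j ∈ s, p i ≠ 0 → q j ≠ 0 → f i ≤ f j) :
    (∑ i ∈ s, p i * f i) * ∑ j ∈ s, q j ≤ (∑ i ∈ s, p i) * ∑ j ∈ s, q j * f j := by
  rw [sum_mul_sum, sum_mul_sum]
  refine sum_le_sum fun i hi => sum_le_sum fun j hj => ?_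
  by_cases hpi : p i = 0
  · simp [hpi]
  by_cases hqj : q j = 0
  · simp [hqj]
  calc p i * f i * q j = p i * q j * f i := by ring
    _ ≤ p i * q j * f j := mul_le_mul_of_nonneg_left (hf i hi j hj hpi hqj)
        (mul_nonneg (hp i hi) (hq j hj))
    _ = p i * (q j * f j) := by ring

/-- A piece `[W (i-1), W i]` meeting `[a, b]` in positive length has index at most that of any
piece meeting `[b, c]` in positive length. -/
lemma sum_overlapLength_mul_le {W x : ℕ → ℝ} {n : ℕ} {a b c : ℝ}
    (hW : MonotoneOn W (Set.Iic n)) (hx : MonotoneOn x (Set.Icc 1 n))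
    (ha : W 0 ≤ a) (hab : a ≤ b) (hbc : b ≤ c) (hc : c ≤ W n) :
    (∑ i ∈ Icc 1 n, overlapLength (W (i - 1)) (W i) a b * x i) * (c - b) ≤
      (b - a) * ∑ i ∈ Icc 1 n, overlapLength (W (i - 1)) (W i) b c * x i := by
  rw [← sum_overlapLength_eq hW ha hab (hbc.trans hc),
    ← sum_overlapLength_eq hW (ha.trans hab) hbc hc]
  refine sum_mul_mul_sum_le_sum_mul_sum_mul (fun _ _ => overlapLength_nonneg ..)
    (fun _ _ => overlapLength_nonneg ..) fun i hi j hj hpi hqj => ?_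
  have hi_lt_b := (lt_of_overlapLength_pos ((overlapLength_nonneg ..).lt_of_ne' hpi)).1
  have hb_lt_j := (lt_of_overlapLength_pos ((overlapLength_nonneg ..).lt_of_ne' hqj)).2
  rw [mem_Icc] at hi hj
  have hij : i - 1 < j := hW.reflect_lt (by simp; omega) (by simpa using hj.2)
    (hi_lt_b.trans hb_lt_j)
  exact hx (by simpa using hi) (by simpa using hj) (by omega)

theorem segmentation_points_monotone_general
    (n n' : ℕ)
    (x w : ℕ → ℝ)
    (hx : StrictMonoOn x (Set.Icc 1 n))
    (hw : ∀ i ∈ Finset.Icc 1 n, 0 ≤ w i)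
    (hw1 : ∑ i ∈ Finset.Icc 1 n, w i = 1)
    (η : ℕ → ℕ → ℝ)
    (hη : ∀ i j, η i j =
      max 0 (min (∑ l ∈ Finset.Icc 1 i, w l) ((j : ℝ) / n')
        - max (∑ l ∈ Finset.Icc 1 (i - 1), w l) (((j : ℝ) - 1) / n')))
    (xt : ℕ → ℝ)
    (hxt : ∀ j, xt j = n' * ∑ i ∈ Finset.Icc 1 n, η i j * x i) :
    ∀ j ∈ Finset.Icc 1 n', ∀ j' ∈ Finset.Icc 1 n', j ≤ j' → xt j ≤ xt j' := by
  set W : ℕ → ℝ := fun i => ∑ l ∈ Icc 1 i, w l with hW_def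
  have hW : MonotoneOn W (Set.Iic n) := fun i _ j hj hij =>
    sum_le_sum_of_subset_of_nonneg (Icc_subset_Icc_right hij) fun l hl _ =>
      hw l (mem_Icc.2 ⟨(mem_Icc.1 hl).1, (mem_Icc.1 hl).2.trans hj⟩)
  have hW0 : W 0 = 0 := by simp [hW_def]
  have hcol : ∀ i (j : ℕ), η i j = overlapLength (W (i - 1)) (W i) ((j - 1) / n') (j / n') := hη
  have hstep : ∀ k, k ∈ Set.Icc 1 n' → k + 1 ∈ Set.Icc 1 n' → xt k ≤ xt (k + 1) := by
    intro k hk hk_succ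
    have hn' : (0 : ℝ) < n' := by exact_mod_cast hk.1.trans hk.2
    have hk₁ : (1 : ℝ) ≤ k := by exact_mod_cast hk.1
    have hk₂ : (k : ℝ) + 1 ≤ n' := by exact_mod_cast hk_succ.2
    have key := sum_overlapLength_mul_le (a := (k - 1) / n') (b := k / n') (c := (k + 1) / n')
      hW hx.monotoneOn (by rw [hW0]; exact div_nonneg (by linarith) hn'.le)
      (div_le_div_of_nonneg_right (by linarith) hn'.le)
      (div_le_div_of_nonneg_right (by linarith) hn'.le)
      (by rw [show W n = 1 from hw1, div_le_one hn']; exact hk₂)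
    rw [show ((k : ℝ) + 1) / n' - k / n' = (n' : ℝ)⁻¹ by ring,
      show (k : ℝ) / n' - (k - 1) / n' = (n' : ℝ)⁻¹ by ring, mul_comm] at key
    rw [hxt, hxt]
    simp only [hcol, Nat.cast_add_one, add_sub_cancel_right]
    exact mul_le_mul_of_nonneg_left (le_of_mul_le_mul_left key (inv_pos.2 hn')) hn'.le
  intro j hj j' hj' hjj'
  exact monotoneOn_of_le_add_one Set.ordConnected_Icc (fun k _ => hstep k)
    (by simpa using hj) (by simpa using hj') hjj'

/-- The segmentation points `x̃ j = n' * ∑ i, η i j * x i`, where `η` is the greedy coupling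
to uniform target weights, form a nondecreasing sequence. -/
theorem segmentation_points_monotone
    (n n' : ℕ) (hn : 1 ≤ n) (hn' : 1 ≤ n')
    (x w : ℕ → ℝ)
    (hx : StrictMonoOn x (Set.Icc 1 n))
    (hw : ∀ i ∈ Finset.Icc 1 n, 0 ≤ w i)
    (hw1 : ∑ i ∈ Finset.Icc 1 n, w i = 1)
    (η : ℕ → ℕ → ℝ)
    (hη : ∀ i j, η i j =
      max 0 (min (∑ l ∈ Finset.Icc 1 i, w l) ((j : ℝ) / n')
        - max (∑ l ∈ Finset.Icc 1 (i - 1), w l) (((j : ℝ) - 1) / n')))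
    (xt : ℕ → ℝ)
    (hxt : ∀ j, xt j = n' * ∑ i ∈ Finset.Icc 1 n, η i j * x i) :
    ∀ j ∈ Finset.Icc 1 n', ∀ j' ∈ Finset.Icc 1 n', j ≤ j' → xt j ≤ xt j' :=
  segmentation_points_monotone_general n n' x w hx hw hw1 η hη xt hxt
end

section
/- If the relevance mass is concentrated: suppose indices in a set E ⊆ {1,...,n} carry total weight ∑_{i∈E} w_i ≥ 1 − δ for the normalized relevance weights w, and E is an interval of indices. Then the number of columns j of the greedy uniform coupling whose support interval [k_{j-1}, k_j] is disjoint from E is at most δ n' + 2; i.e., at least n' − δn' − 2 of the n' segmentation points lie in the interval [x_{min E}, x_{max E}]. -/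
/-!
Let `S l = w 1 + ⋯ + w l`, `α = S (a - 1)` and `β = S b`, so that `β - α ≥ 1 - δ`. As `k u` is
the first index with `S (k u) ≥ u / n'`, a column `j` with `k j < a` has `j ≤ α n'`, and one
with `k (j - 1) > b` has `j - 1 > β n'`. Since `k` is monotone, a support interval disjoint
from `E` is of one of these two kinds, so there are at most `α n' + (1 - β) n' ≤ δ n'` of them.
Likewise, by monotonicity of `x`, a column whose segmentation point lies outside `[x a, x b]`
has `k (j - 1) < a` or `k j > b`, and the same count, shifted by one index on each side,
bounds these columns by `δ n' + 2`.
-/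

open Finset

theorem card_le_of_forall_mem_le {T : Finset ℕ} {c : ℝ} (hc : 0 ≤ c)
    (hT : ∀ j ∈ T, 1 ≤ j ∧ (j : ℝ) ≤ c) : (#T : ℝ) ≤ c := by
  have hsub : T ⊆ Icc 1 ⌊c⌋₊ := fun j hj =>
    mem_Icc.mpr ⟨(hT j hj).1, Nat.le_floor (hT j hj).2⟩
  calc (#T : ℝ) ≤ ⌊c⌋₊ := by exact_mod_cast (card_le_card hsub).trans (by simp)
    _ ≤ c := Nat.floor_le hc

theorem card_le_of_forall_mem_ge {N : ℕ} {T : Finset ℕ} {c : ℝ} (hc : c ≤ N + 1)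
    (hT : ∀ j ∈ T, j ≤ N ∧ c ≤ j) : (#T : ℝ) ≤ N + 1 - c := by
  have hsub : T ⊆ Icc ⌈c⌉₊ N := fun j hj =>
    mem_Icc.mpr ⟨Nat.ceil_le.mpr (hT j hj).2, (hT j hj).1⟩
  have hceil : ⌈c⌉₊ ≤ N + 1 := Nat.ceil_le.mpr (by exact_mod_cast hc)
  calc (#T : ℝ) ≤ ((N + 1 - ⌈c⌉₊ : ℕ) : ℝ) := by
        exact_mod_cast (card_le_card hsub).trans (by simp)
    _ = N + 1 - ⌈c⌉₊ := by push_cast [hceil]; ring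
    _ ≤ N + 1 - c := by linarith [Nat.le_ceil c]

theorem card_filter_le_card_filter_add_card_filter {α : Type*} [DecidableEq α] {s : Finset α}
    {p q r : α → Prop} [DecidablePred p] [DecidablePred q] [DecidablePred r]
    (h : ∀ x ∈ s, p x → q x ∨ r x) : #(s.filter p) ≤ #(s.filter q) + #(s.filter r) := by
  refine (card_le_card fun x hx => ?_).trans (card_union_le _ _)
  obtain ⟨hxs, hpx⟩ := mem_filter.mp hx
  rcases h x hxs hpx with hq | hr
  · exact mem_union_left _ (mem_filter.mpr ⟨hxs, hq⟩)
  · exact mem_union_right _ (mem_filter.mpr ⟨hxs, hr⟩)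

theorem lt_or_lt_of_disjoint_Icc {α : Type*} [LinearOrder α] [LocallyFiniteOrder α]
    {p q a b : α} (hpq : p ≤ q) (hab : a ≤ b) (h : Disjoint (Icc p q) (Icc a b)) :
    q < a ∨ b < p := by
  by_contra! hmeet
  exact disjoint_left.mp h (mem_Icc.mpr ⟨le_max_right a p, max_le hmeet.1 hpq⟩)
    (mem_Icc.mpr ⟨le_max_left a p, max_le hab hmeet.2⟩)

def partialSum (w : ℕ → ℝ) (l : ℕ) : ℝ := ∑ i ∈ Icc 1 l, w i

def IsUniformQuantile (w : ℕ → ℝ) (n n' : ℕ) (k : ℕ → ℕ) : Prop :=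
  ∀ u ∈ Icc 1 n', k u ∈ Icc 1 n ∧ (u : ℝ) / n' ≤ partialSum w (k u) ∧
    ∀ l < k u, partialSum w l < (u : ℝ) / n'

section

variable {w : ℕ → ℝ} {n n' : ℕ} {k : ℕ → ℕ}

theorem partialSum_mono (hw : ∀ i ∈ Icc 1 n, 0 ≤ w i) {l m : ℕ} (hlm : l ≤ m) (hm : m ≤ n) :
    partialSum w l ≤ partialSum w m :=
  sum_le_sum_of_subset_of_nonneg (Icc_subset_Icc_right hlm) fun i hi _ =>
    hw i (Icc_subset_Icc_right hm hi)

theorem partialSum_nonneg (hw : ∀ i ∈ Icc 1 n, 0 ≤ w i) {l : ℕ} (hl : l ≤ n) :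
    0 ≤ partialSum w l := by
  simpa [partialSum] using partialSum_mono hw (Nat.zero_le l) hl

theorem partialSum_pred_add_sum_Icc {a b : ℕ} (ha : 1 ≤ a) (hab : a ≤ b + 1) :
    partialSum w (a - 1) + ∑ i ∈ Icc a b, w i = partialSum w b := by
  obtain ⟨c, rfl⟩ : ∃ c, a = c + 1 := ⟨a - 1, by omega⟩
  have hIoc : ∀ m l, Icc (m + 1) l = Ioc m l := fun m l => Icc_add_one_left_eq_Ioc m l
  simp only [partialSum, Nat.add_sub_cancel, hIoc]
  exact sum_Ioc_consecutive w (Nat.zero_le c) (by omega)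

theorem IsUniformQuantile.le_mul_partialSum (hw : ∀ i ∈ Icc 1 n, 0 ≤ w i)
    (hk : IsUniformQuantile w n n' k) {u m : ℕ} (hu : u ∈ Icc 1 n') (hum : k u ≤ m)
    (hm : m ≤ n) : (u : ℝ) ≤ n' * partialSum w m := by
  have hn' : (0 : ℝ) < n' := by have := mem_Icc.mp hu; exact_mod_cast (by omega : 0 < n')
  rw [← div_le_iff₀' hn']
  exact (hk u hu).2.1.trans (partialSum_mono hw hum hm)

theorem IsUniformQuantile.mul_partialSum_lt (hk : IsUniformQuantile w n n' k) {u m : ℕ}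
    (hu : u ∈ Icc 1 n') (hmu : m < k u) : n' * partialSum w m < u := by
  have hn' : (0 : ℝ) < n' := by have := mem_Icc.mp hu; exact_mod_cast (by omega : 0 < n')
  rw [← lt_div_iff₀' hn']
  exact (hk u hu).2.2 m hmu

theorem IsUniformQuantile.pred_le (hw : ∀ i ∈ Icc 1 n, 0 ≤ w i)
    (hk : IsUniformQuantile w n n' k) (hk0 : k 0 = 1) {j : ℕ} (hj : j ∈ Icc 1 n') :
    k (j - 1) ≤ k j := by
  obtain ⟨hj1, hjn'⟩ := mem_Icc.mp hj
  obtain rfl | hj2 := hj1.eq_or_lt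
  · simpa [hk0] using (mem_Icc.mp (hk 1 hj).1).1
  by_contra! hlt
  have h1 := hk.le_mul_partialSum hw hj le_rfl (mem_Icc.mp (hk j hj).1).2
  have h2 := hk.mul_partialSum_lt (mem_Icc.mpr ⟨by omega, by omega⟩) hlt
  have : ((j - 1 : ℕ) : ℝ) < j := by exact_mod_cast (by omega : j - 1 < j)
  linarith

theorem IsUniformQuantile.card_filter_le_le (hw : ∀ i ∈ Icc 1 n, 0 ≤ w i)
    (hk : IsUniformQuantile w n n' k) {m : ℕ} (hm : m ≤ n) :
    (#{j ∈ Icc 1 n' | k j ≤ m} : ℝ) ≤ n' * partialSum w m := by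
  refine card_le_of_forall_mem_le (by positivity [partialSum_nonneg hw hm]) fun j hj => ?_
  obtain ⟨hj, hjm⟩ := mem_filter.mp hj
  exact ⟨(mem_Icc.mp hj).1, hk.le_mul_partialSum hw hj hjm hm⟩

theorem IsUniformQuantile.card_filter_pred_le_le (hw : ∀ i ∈ Icc 1 n, 0 ≤ w i)
    (hk : IsUniformQuantile w n n' k) {m : ℕ} (hm : m ≤ n) :
    (#{j ∈ Icc 1 n' | k (j - 1) ≤ m} : ℝ) ≤ n' * partialSum w m + 1 := by
  have hS := partialSum_nonneg hw hm
  refine card_le_of_forall_mem_le (by positivity) fun j hj => ?_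
  obtain ⟨hj, hjm⟩ := mem_filter.mp hj
  obtain ⟨hj1, hjn'⟩ := mem_Icc.mp hj
  refine ⟨hj1, ?_⟩
  obtain rfl | hj2 := hj1.eq_or_lt
  · simp only [Nat.cast_one, le_add_iff_nonneg_left]; positivity
  have h := hk.le_mul_partialSum hw (mem_Icc.mpr ⟨by omega, by omega⟩) hjm hm
  rw [Nat.cast_sub hj1, Nat.cast_one] at h
  linarith

theorem IsUniformQuantile.card_filter_lt_le (hk : IsUniformQuantile w n n' k) {m : ℕ}
    (hm : partialSum w m ≤ 1) :
    (#{j ∈ Icc 1 n' | m < k j} : ℝ) ≤ n' + 1 - n' * partialSum w m := by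
  refine card_le_of_forall_mem_ge (by nlinarith [(n'.cast_nonneg : (0 : ℝ) ≤ n')])
    fun j hj => ?_
  obtain ⟨hj, hjm⟩ := mem_filter.mp hj
  exact ⟨(mem_Icc.mp hj).2, (hk.mul_partialSum_lt hj hjm).le⟩

theorem IsUniformQuantile.card_filter_lt_pred_le (hk : IsUniformQuantile w n n' k)
    (hk0 : k 0 = 1) {m : ℕ} (hm1 : 1 ≤ m) (hm : partialSum w m ≤ 1) :
    (#{j ∈ Icc 1 n' | m < k (j - 1)} : ℝ) ≤ n' - n' * partialSum w m := by
  have h := card_le_of_forall_mem_ge (N := n') (c := n' * partialSum w m + 1)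
    (T := {j ∈ Icc 1 n' | m < k (j - 1)})
    (by nlinarith [(n'.cast_nonneg : (0 : ℝ) ≤ n')]) fun j hj => by
      obtain ⟨hj, hjm⟩ := mem_filter.mp hj
      obtain ⟨hj1, hjn'⟩ := mem_Icc.mp hj
      have hj2 : 2 ≤ j := by
        by_contra! hj2
        obtain rfl : j = 1 := by omega
        simp only [Nat.sub_self, hk0] at hjm
        omega
      have hlt := hk.mul_partialSum_lt (mem_Icc.mpr ⟨by omega, by omega⟩) hjm
      rw [Nat.cast_sub (by omega), Nat.cast_one] at hlt
      exact ⟨hjn', by linarith⟩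
  linarith

theorem IsUniformQuantile.card_filter_disjoint_le (hw : ∀ i ∈ Icc 1 n, 0 ≤ w i)
    (hk : IsUniformQuantile w n n' k) (hk0 : k 0 = 1) {a b : ℕ} (hab : a ≤ b)
    (ha : a ≤ n + 1) (hb1 : 1 ≤ b) (hb : partialSum w b ≤ 1) :
    (#{j ∈ Icc 1 n' | Disjoint (Icc (k (j - 1)) (k j)) (Icc a b)} : ℝ) ≤
      n' * partialSum w (a - 1) + (n' - n' * partialSum w b) := by
  have hsplit := card_filter_le_card_filter_add_card_filter (s := Icc 1 n')
    (q := fun j => k j ≤ a - 1) (r := fun j => b < k (j - 1)) fun j hj hdisj => by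
      rcases lt_or_lt_of_disjoint_Icc (hk.pred_le hw hk0 hj) hab hdisj with h | h
      · exact Or.inl (by omega)
      · exact Or.inr h
  calc _ ≤ (#{j ∈ Icc 1 n' | k j ≤ a - 1} : ℝ) + #{j ∈ Icc 1 n' | b < k (j - 1)} := by
        exact_mod_cast hsplit
    _ ≤ _ := add_le_add (hk.card_filter_le_le hw (by omega)) (hk.card_filter_lt_pred_le hk0 hb1 hb)

theorem IsUniformQuantile.card_filter_not_between_le (hw : ∀ i ∈ Icc 1 n, 0 ≤ w i)
    (hk : IsUniformQuantile w n n' k) (hk0 : k 0 = 1) {x xt : ℕ → ℝ}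
    (hx : MonotoneOn x (Set.Icc 1 n))
    (hxt : ∀ j ∈ Icc 1 n', x (k (j - 1)) ≤ xt j ∧ xt j ≤ x (k j))
    {a b : ℕ} (hE : Icc a b ⊆ Icc 1 n) (hab : a ≤ b) (hb : partialSum w b ≤ 1) :
    (#{j ∈ Icc 1 n' | ¬(x a ≤ xt j ∧ xt j ≤ x b)} : ℝ) ≤
      n' * partialSum w (a - 1) + 1 + (n' + 1 - n' * partialSum w b) := by
  have hE' : ∀ i, a ≤ i → i ≤ b → i ∈ Set.Icc 1 n := fun i hai hib => by
    simpa using hE (mem_Icc.mpr ⟨hai, hib⟩)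
  have hsplit := card_filter_le_card_filter_add_card_filter (s := Icc 1 n')
    (p := fun j => ¬(x a ≤ xt j ∧ xt j ≤ x b)) (q := fun j => k (j - 1) ≤ a - 1) (r := fun j => b < k j) fun j hj hout => by
      by_contra! hin
      have hpred := hk.pred_le hw hk0 hj
      obtain ⟨ht1, ht2⟩ := hxt j hj
      exact hout ⟨(hx (hE' a le_rfl hab) (hE' _ (by omega) (by omega)) (by omega)).trans ht1,
        ht2.trans (hx (hE' _ (by omega) (by omega)) (hE' b hab le_rfl) hin.2)⟩
  calc _ ≤ (#{j ∈ Icc 1 n' | k (j - 1) ≤ a - 1} : ℝ) + #{j ∈ Icc 1 n' | b < k j} := by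
        exact_mod_cast hsplit
    _ ≤ _ := add_le_add (hk.card_filter_pred_le_le hw (by have := (hE' a le_rfl hab).2; omega))
        (hk.card_filter_lt_le hb)

end

theorem concentration_of_segmentation_points_general
    (n n' : ℕ)
    (x w : ℕ → ℝ) (δ : ℝ)
    (hx : MonotoneOn x (Set.Icc 1 n))
    (hw : ∀ i ∈ Finset.Icc 1 n, 0 ≤ w i)
    (hw1 : ∑ i ∈ Finset.Icc 1 n, w i = 1)
    (k : ℕ → ℕ) (hk0 : k 0 = 1)
    (hk : ∀ u ∈ Finset.Icc 1 n', k u ∈ Finset.Icc 1 n ∧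
      (u : ℝ) / n' ≤ ∑ i ∈ Finset.Icc 1 (k u), w i ∧
      ∀ l < k u, ∑ i ∈ Finset.Icc 1 l, w i < (u : ℝ) / n')
    (a b : ℕ) (hab : a ≤ b) (hE : Finset.Icc a b ⊆ Finset.Icc 1 n)
    (hmass : 1 - δ ≤ ∑ i ∈ Finset.Icc a b, w i)
    (xt : ℕ → ℝ)
    (hxt : ∀ j ∈ Finset.Icc 1 n', x (k (j - 1)) ≤ xt j ∧ xt j ≤ x (k j)) :
    (((Finset.Icc 1 n').filter
        (fun j => Disjoint (Finset.Icc (k (j - 1)) (k j)) (Finset.Icc a b))).card : ℝ)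
      ≤ δ * n' + 2 ∧
    (n' : ℝ) - δ * n' - 2 ≤
      (((Finset.Icc 1 n').filter (fun j => x a ≤ xt j ∧ xt j ≤ x b)).card : ℝ) := by
  have hq : IsUniformQuantile w n n' k := hk
  obtain ⟨ha1, -⟩ := mem_Icc.mp (hE (left_mem_Icc.mpr hab))
  obtain ⟨hb1, hbn⟩ := mem_Icc.mp (hE (right_mem_Icc.mpr hab))
  have hb : partialSum w b ≤ 1 := hw1 ▸ partialSum_mono hw hbn le_rfl
  have hgap : n' * partialSum w (a - 1) + (n' - n' * partialSum w b) ≤ δ * n' := by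
    have := partialSum_pred_add_sum_Icc (w := w) ha1 (by omega : a ≤ b + 1)
    nlinarith [(n'.cast_nonneg : (0 : ℝ) ≤ n')]
  have hdisj := hq.card_filter_disjoint_le hw hk0 hab (by omega) hb1 hb
  have hout := hq.card_filter_not_between_le hw hk0 hx hxt hE hab hb
  have htotal : (#{j ∈ Icc 1 n' | x a ≤ xt j ∧ xt j ≤ x b} : ℝ) +
      #{j ∈ Icc 1 n' | ¬(x a ≤ xt j ∧ xt j ≤ x b)} = n' := by
    exact_mod_cast (card_filter_add_card_filter_not _).trans (Nat.card_Icc 1 n')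
  constructor <;> linarith

/-- If the relevance mass is concentrated on a contiguous block `E = [a, b]` of indices,
carrying weight at least `1 − δ`, then at most `δ n' + 2` of the columns of the greedy
uniform coupling have support interval `[k (j-1), k j]` disjoint from `E`; consequently
at least `n' − δ n' − 2` of the `n'` segmentation points lie in `[x a, x b]`. -/
theorem concentration_of_segmentation_points
    (n n' : ℕ) (hn : 1 ≤ n) (hn' : 1 ≤ n')
    (x w : ℕ → ℝ) (δ : ℝ) (hδ0 : 0 ≤ δ) (hδ1 : δ ≤ 1)
    (hx : MonotoneOn x (Set.Icc 1 n))
    (hw : ∀ i ∈ Finset.Icc 1 n, 0 ≤ w i)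
    (hw1 : ∑ i ∈ Finset.Icc 1 n, w i = 1)
    (k : ℕ → ℕ) (hk0 : k 0 = 1)
    (hk : ∀ u ∈ Finset.Icc 1 n', k u ∈ Finset.Icc 1 n ∧
      (u : ℝ) / n' ≤ ∑ i ∈ Finset.Icc 1 (k u), w i ∧
      ∀ l < k u, ∑ i ∈ Finset.Icc 1 l, w i < (u : ℝ) / n')
    (a b : ℕ) (hab : a ≤ b) (hE : Finset.Icc a b ⊆ Finset.Icc 1 n)
    (hmass : 1 - δ ≤ ∑ i ∈ Finset.Icc a b, w i)
    (xt : ℕ → ℝ)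
    (hxt : ∀ j ∈ Finset.Icc 1 n', x (k (j - 1)) ≤ xt j ∧ xt j ≤ x (k j)) :
    (((Finset.Icc 1 n').filter
        (fun j => Disjoint (Finset.Icc (k (j - 1)) (k j)) (Finset.Icc a b))).card : ℝ)
      ≤ δ * n' + 2 ∧
    (n' : ℝ) - δ * n' - 2 ≤
      (((Finset.Icc 1 n').filter (fun j => x a ≤ xt j ∧ xt j ≤ x b)).card : ℝ) :=
  concentration_of_segmentation_points_general n n' x w δ hx hw hw1 k hk0 hk a b hab hE hmass xt hxt
end
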